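/- For a 2 × 2 unitary U and two indistinguishable photons entering modes 1 and 2 (g = (1,1)), the probability that both exit in mode j is 2|U_{j,1}U_{j,2}|², exactly twice the classical probability |U_{j,1}|²|U_{j,2}|² — the Hong–Ou–Mandel 2! enhancement. -/

import Mathlib

open Finset

/-- The permanent of an `n × n` complex matrix. -/
noncomputable def perm {n : ℕ} (A : Matrix (Fin n) (Fin n) ℂ) : ℂ :=
  ∑ σ : Equiv.Perm (Fin n), ∏ i, A i (σ i)

open Nat

theorem perm_of_rows_eq {n : ℕ} (A : Matrix (Fin n) (Fin n) ℂ) (v : Fin n → ℂ)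
    (hA : ∀ i k, A i k = v k) : perm A = n ! * ∏ k, v k := by
  simp only [perm, hA, Equiv.prod_comp, sum_const, Finset.card_univ, Fintype.card_perm,
    Fintype.card_fin, nsmul_eq_mul]

theorem norm_sq_perm_of_rows_eq_div_factorial {n : ℕ} (A : Matrix (Fin n) (Fin n) ℂ)
    (v : Fin n → ℂ) (hA : ∀ i k, A i k = v k) :
    ‖perm A‖ ^ 2 / (n ! : ℝ) = n ! * ∏ k, ‖v k‖ ^ 2 := by
  have hfact : (n ! : ℝ) ≠ 0 := by positivity
  rw [perm_of_rows_eq A v hA, norm_mul, Complex.norm_natCast, norm_prod, mul_pow,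
    prod_pow]
  field_simp

theorem hom_two_factorial_enhancement_general (U : Matrix (Fin 2) (Fin 2) ℂ)
    (j : Fin 2)
    (A : Matrix (Fin 2) (Fin 2) ℂ) (hA : ∀ i k, A i k = U j k) :
    ‖perm A‖ ^ 2 / (Nat.factorial 2 : ℝ)
      = 2 * ‖U j 0 * U j 1‖ ^ 2 ∧
    ‖perm A‖ ^ 2 / (Nat.factorial 2 : ℝ)
      = 2 * (‖U j 0‖ ^ 2 * ‖U j 1‖ ^ 2) := by
  have h := norm_sq_perm_of_rows_eq_div_factorial A (U j) hA
  rw [Fin.prod_univ_two, factorial_two, cast_two] at h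
  rw [factorial_two, cast_two, h, norm_mul, mul_pow]
  exact ⟨rfl, rfl⟩

/-- Hong–Ou–Mandel `2!` enhancement: for a `2 × 2` unitary `U` and two
indistinguishable photons, the quantum probability that both exit in mode `j`,
`q_q(j) = |per A|²/2!` with both rows of `A` equal to `(U j 0, U j 1)`, equals
`2·|U j 0 · U j 1|²`, twice the classical probability `|U j 0|²·|U j 1|²`. -/
theorem hom_two_factorial_enhancement (U : Matrix (Fin 2) (Fin 2) ℂ)
    (hU : U * U.conjTranspose = 1) (j : Fin 2)
    (A : Matrix (Fin 2) (Fin 2) ℂ) (hA : ∀ i k, A i k = U j k) :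
    ‖perm A‖ ^ 2 / (Nat.factorial 2 : ℝ)
      = 2 * ‖U j 0 * U j 1‖ ^ 2 ∧
    ‖perm A‖ ^ 2 / (Nat.factorial 2 : ℝ)
      = 2 * (‖U j 0‖ ^ 2 * ‖U j 1‖ ^ 2) :=
  hom_two_factorial_enhancement_general U j A hA
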